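/- For every n = 0, 1, 2, …, the rational numbers u_n and v_n produced by the recurrence are well defined (i.e., the leading coefficient (2n+1)^2(2n+2)^2 p(n) never vanishes) and satisfy u_n > 0 for all n ≥ 0 and v_n > 0 for all n ≥ 1. -/

import Mathlib

/-!
All coefficients of the recurrence, solved for `w_{n+1}`, are positive: `p` has negative
discriminant and `q` is positive on `[0, ∞)`. Hence a solution with `w₀ ≥ 0` and `w₁ > 0` stays
positive from index `1` on, by induction on consecutive pairs.
-/

open Filter Topology

noncomputable section

/-- `p(x) = 20x² - 8x + 1`. -/
def pp (x : ℚ) : ℚ := 20*x^2 - 8*x + 1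

/-- `q(x) = 3520x⁶ + 5632x⁵ + 2064x⁴ - 384x³ - 156x² + 16x + 7`. -/
def qq (x : ℚ) : ℚ := 3520*x^6 + 5632*x^5 + 2064*x^4 - 384*x^3 - 156*x^2 + 16*x + 7

/-- The sequence `u`: `u₀ = 1`, `u₁ = 7/4`, and for `n ≥ 1`
`(2n+1)²(2n+2)² p(n) u_{n+1} - q(n) u_n - (2n-1)²(2n)² p(n+1) u_{n-1} = 0`
(written here solving for `u_{n+2}` at index `n+1 ≥ 1`). -/
def uSeq : ℕ → ℚ
  | 0 => 1
  | 1 => 7/4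
  | n + 2 =>
      (qq ((n : ℚ) + 1) * uSeq (n + 1)
          + (2*(n : ℚ)+1)^2 * (2*(n : ℚ)+2)^2 * pp ((n : ℚ) + 2) * uSeq n)
        / ((2*(n : ℚ)+3)^2 * (2*(n : ℚ)+4)^2 * pp ((n : ℚ) + 1))

/-- The sequence `v`: `v₀ = 0`, `v₁ = 13/8`, same recurrence as `u`. -/
def vSeq : ℕ → ℚ
  | 0 => 0
  | 1 => 13/8
  | n + 2 =>
      (qq ((n : ℚ) + 1) * vSeq (n + 1)
          + (2*(n : ℚ)+1)^2 * (2*(n : ℚ)+2)^2 * pp ((n : ℚ) + 2) * vSeq n)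
        / ((2*(n : ℚ)+3)^2 * (2*(n : ℚ)+4)^2 * pp ((n : ℚ) + 1))

/-- `D n = lcm(1, 2, …, n)` (equal to `1` for `n = 0`). -/
def D (n : ℕ) : ℕ := (Finset.Icc 1 n).lcm id

/-- Catalan's constant `G = Σ_{l≥0} (-1)^l / (2l+1)²`. -/
def G : ℝ := ∑' l : ℕ, (-1)^l / (2*(l : ℝ)+1)^2

theorem pp_pos (x : ℚ) : 0 < pp x := by
  unfold pp
  nlinarith [sq_nonneg (10 * x - 2)]

theorem qq_pos {x : ℚ} (hx : 0 ≤ x) : 0 < qq x := by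
  unfold qq
  nlinarith [sq_nonneg (x - 1/5), sq_nonneg (x^2 - x), pow_nonneg hx 3, pow_nonneg hx 4,
    pow_nonneg hx 5, pow_nonneg hx 6, mul_nonneg hx (sq_nonneg (x - 1/5)),
    mul_nonneg (pow_nonneg hx 2) (sq_nonneg (x - 1/5))]

def recStep (n : ℕ) (a b : ℚ) : ℚ :=
  (qq ((n : ℚ) + 1) * b + (2*(n : ℚ)+1)^2 * (2*(n : ℚ)+2)^2 * pp ((n : ℚ) + 2) * a)
    / ((2*(n : ℚ)+3)^2 * (2*(n : ℚ)+4)^2 * pp ((n : ℚ) + 1))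

theorem recStep_pos (n : ℕ) {a b : ℚ} (ha : 0 ≤ a) (hb : 0 < b) : 0 < recStep n a b := by
  have hq := qq_pos (by positivity : (0 : ℚ) ≤ n + 1)
  have hp₁ := pp_pos ((n : ℚ) + 1)
  have hp₂ := pp_pos ((n : ℚ) + 2)
  unfold recStep
  positivity

theorem pos_of_recStep {w : ℕ → ℚ} (h₀ : 0 ≤ w 0) (h₁ : 0 < w 1)
    (hrec : ∀ n, w (n + 2) = recStep n (w n) (w (n + 1))) (n : ℕ) : 0 < w (n + 1) := by
  suffices ∀ n, 0 ≤ w n ∧ 0 < w (n + 1) from (this n).2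
  intro n
  induction n with
  | zero => exact ⟨h₀, h₁⟩
  | succ k ih => exact ⟨ih.2.le, hrec k ▸ recStep_pos k ih.1 ih.2⟩

theorem uSeq_add_two (n : ℕ) : uSeq (n + 2) = recStep n (uSeq n) (uSeq (n + 1)) := by
  rw [uSeq, recStep]

theorem vSeq_add_two (n : ℕ) : vSeq (n + 2) = recStep n (vSeq n) (vSeq (n + 1)) := by
  rw [vSeq, recStep]

theorem uSeq_pos (n : ℕ) : 0 < uSeq n := by
  cases n with
  | zero => norm_num [uSeq]
  | succ n => exact pos_of_recStep (by norm_num [uSeq]) (by norm_num [uSeq]) uSeq_add_two n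

theorem vSeq_pos {n : ℕ} (hn : 1 ≤ n) : 0 < vSeq n := by
  obtain ⟨k, rfl⟩ := Nat.exists_eq_add_of_le' hn
  exact pos_of_recStep (by norm_num [vSeq]) (by norm_num [vSeq]) vSeq_add_two k

/-- the leading coefficient `(2n+1)²(2n+2)² p(n)` of the recurrence never
vanishes (so `u_n`, `v_n` are well defined), `u_n > 0` for all `n ≥ 0`, and `v_n > 0`
for all `n ≥ 1`. -/
theorem catalan_sequences_wellDefined_and_positive :
    (∀ n : ℕ, 1 ≤ n → (2*(n : ℚ)+1)^2 * (2*(n : ℚ)+2)^2 * pp (n : ℚ) ≠ 0) ∧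
    (∀ n : ℕ, 0 < uSeq n) ∧
    (∀ n : ℕ, 1 ≤ n → 0 < vSeq n) := by
  refine ⟨fun n _ => ?_, uSeq_pos, fun _ => vSeq_pos⟩
  have := pp_pos n
  positivity
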